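/- arXiv:1901.08272 — 3 statements merged into one kernel-verified Lean document; each statement's English description precedes it below -/
import Mathlib

section
/- Let f : ℤ → ℤ be a quasi-morphism, i.e. the set {f(m+n) - f(m) - f(n) : m, n ∈ ℤ} is bounded. Then the sequence n ↦ f(n)/n (for n ≥ 1) converges to a real limit. -/
open Filter

/-- A quasi-morphism `f : ℤ → ℤ` (i.e. `f (m+n) - f m - f n` is uniformly bounded)
has a limit `lim_{n→∞} f n / n` in `ℝ`. -/
theorem quasimorphism_limit_exists (f : ℤ → ℤ)
    (hf : ∃ C : ℤ, ∀ m n : ℤ, |f (m + n) - f m - f n| ≤ C) :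
    ∃ L : ℝ, Tendsto (fun n : ℕ => (f n : ℝ) / n) atTop (nhds L) := by
  obtain ⟨C, hC⟩ := hf
  have hC0 : (0:ℤ) ≤ C := le_trans (abs_nonneg _) (hC 0 0)
  have hf0 : |f 0| ≤ C := by have := hC 0 0; simpa using this
  -- Key bound by induction
  have key : ∀ k : ℕ, ∀ n : ℤ, |f ((k:ℤ) * n) - (k:ℤ) * f n| ≤ ((k:ℤ) + 1) * C := by
    intro k
    induction k with
    | zero => intro n; simpa using hf0
    | succ k ih =>
      intro n
      have e : f (((k:ℤ)+1) * n) - ((k:ℤ)+1) * f n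
          = (f ((k:ℤ)*n + n) - f ((k:ℤ)*n) - f n) + (f ((k:ℤ)*n) - (k:ℤ) * f n) := by
        rw [show ((k:ℤ)+1)*n = (k:ℤ)*n + n by ring]; ring
      have h1 := hC ((k:ℤ)*n) n
      have h2 := ih n
      calc |f ((↑(k+1):ℤ) * n) - (↑(k+1):ℤ) * f n|
          = |(f ((k:ℤ)*n + n) - f ((k:ℤ)*n) - f n) + (f ((k:ℤ)*n) - (k:ℤ) * f n)| := by
            push_cast; rw [e]
        _ ≤ |f ((k:ℤ)*n + n) - f ((k:ℤ)*n) - f n| + |f ((k:ℤ)*n) - (k:ℤ) * f n| :=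
            abs_add_le _ _
        _ ≤ C + ((k:ℤ) + 1) * C := add_le_add h1 h2
        _ = ((↑(k+1):ℤ) + 1) * C := by push_cast; ring
  set g : ℕ → ℝ := fun n => (f n : ℝ) / n with hg
  -- real bound: for m, n ≥ 1, |g (m*n) - g n| ≤ 2C/n
  have bound : ∀ m n : ℕ, 1 ≤ m → 1 ≤ n → |g (m*n) - g n| ≤ 2 * (C:ℝ) / n := by
    intro m n hm hn
    have hmR : (0:ℝ) < m := by exact_mod_cast hm
    have hnR : (0:ℝ) < n := by exact_mod_cast hn
    have e : g (m*n) - g n = ((f ((m:ℤ)*(n:ℤ)) : ℝ) - m * f n) / (m * n) := by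
      simp only [hg]
      push_cast
      field_simp
    have h1 : |(f ((m:ℤ)*(n:ℤ)) : ℝ) - m * f n| ≤ ((m:ℝ) + 1) * C := by
      exact_mod_cast key m (n:ℤ)
    have h2 : ((m:ℝ) + 1) * C ≤ 2 * m * C := by
      have hm1 : (1:ℝ) ≤ m := by exact_mod_cast hm
      have : (m:ℝ) + 1 ≤ 2 * m := by linarith
      have hCr : (0:ℝ) ≤ C := by exact_mod_cast hC0
      nlinarith
    rw [e, abs_div, abs_of_pos (by positivity : (0:ℝ) < (m:ℝ) * n)]
    rw [div_le_div_iff₀ (by positivity) hnR]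
    calc |(f ((m:ℤ)*(n:ℤ)) : ℝ) - m * f n| * n ≤ (2 * m * C) * n := by
          nlinarith [le_trans h1 h2, hnR.le]
      _ = 2 * (C:ℝ) * ((m:ℝ) * n) := by ring
  -- distance bound
  have dbound : ∀ m n : ℕ, 1 ≤ m → 1 ≤ n →
      |g n - g m| ≤ 2 * (C:ℝ) / n + 2 * (C:ℝ) / m := by
    intro m n hm hn
    have b1 := bound m n hm hn
    have b2 := bound n m hn hm
    rw [mul_comm n m] at b2
    calc |g n - g m| = |(g (m*n) - g m) - (g (m*n) - g n)| := by ring_nf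
      _ ≤ |g (m*n) - g m| + |g (m*n) - g n| := abs_sub _ _
      _ ≤ 2 * (C:ℝ) / m + 2 * (C:ℝ) / n := add_le_add b2 b1
      _ = 2 * (C:ℝ) / n + 2 * (C:ℝ) / m := by ring
  have hcauchy : CauchySeq g := by
    rw [Metric.cauchySeq_iff']
    intro ε hε
    obtain ⟨N₀, hN₀⟩ := exists_nat_gt (4 * (C:ℝ) / ε)
    refine ⟨max N₀ 1, fun n hn => ?_⟩
    set N := max N₀ 1 with hN
    have hN1 : 1 ≤ N := le_max_right _ _
    have hn1 : 1 ≤ n := le_trans hN1 hn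
    have hNR : (0:ℝ) < N := by exact_mod_cast hN1
    have hnR : (0:ℝ) < n := by exact_mod_cast hn1
    have hNgt : 4 * (C:ℝ) / ε < N :=
      lt_of_lt_of_le hN₀ (by exact_mod_cast le_max_left N₀ 1)
    have hCr : (0:ℝ) ≤ C := by exact_mod_cast hC0
    have h4 : 4 * (C:ℝ) < ε * N := by
      have := (div_lt_iff₀ hε).mp hNgt
      linarith
    have hnN : (N:ℝ) ≤ n := by exact_mod_cast hn
    rw [Real.dist_eq]
    calc |g n - g N| ≤ 2 * (C:ℝ) / n + 2 * (C:ℝ) / N := dbound N n hN1 hn1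
      _ ≤ 2 * (C:ℝ) / N + 2 * (C:ℝ) / N := by
          gcongr
      _ = 4 * (C:ℝ) / N := by ring
      _ < ε := by rw [div_lt_iff₀ hNR]; linarith
  exact cauchySeq_tendsto_of_complete hcauchy
end

section
/- The map sending a quasi-morphism f : ℤ → ℤ to lim_{n→∞} f(n)/n induces a group isomorphism from the quotient of the group of quasi-morphisms of ℤ by the subgroup of bounded functions, onto ℝ. -/
open Filter

/-- The additive group of quasi-morphisms `ℤ → ℤ`. -/
def QuasiMorphism : AddSubgroup (ℤ → ℤ) where
  carrier := {f | ∃ C : ℤ, ∀ m n : ℤ, |f (m + n) - f m - f n| ≤ C}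
  zero_mem' := ⟨0, by simp⟩
  add_mem' := by
    rintro f g ⟨C, hC⟩ ⟨D, hD⟩
    refine ⟨C + D, fun m n => ?_⟩
    have e : (f + g) (m + n) - (f + g) m - (f + g) n
        = (f (m + n) - f m - f n) + (g (m + n) - g m - g n) := by
      simp [Pi.add_apply]; ring
    rw [e]
    exact le_trans (abs_add_le _ _) (add_le_add (hC m n) (hD m n))
  neg_mem' := by
    rintro f ⟨C, hC⟩
    refine ⟨C, fun m n => ?_⟩
    have e : (-f) (m + n) - (-f) m - (-f) n = -(f (m + n) - f m - f n) := by
      simp [Pi.neg_apply]; ring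
    rw [e, abs_neg]
    exact hC m n

/-- The additive group of bounded functions `ℤ → ℤ`. -/
def BoundedFun : AddSubgroup (ℤ → ℤ) where
  carrier := {f | ∃ C : ℤ, ∀ n : ℤ, |f n| ≤ C}
  zero_mem' := ⟨0, by simp⟩
  add_mem' := by
    rintro f g ⟨C, hC⟩ ⟨D, hD⟩
    exact ⟨C + D, fun n => le_trans (abs_add_le _ _) (add_le_add (hC n) (hD n))⟩
  neg_mem' := by
    rintro f ⟨C, hC⟩
    exact ⟨C, fun n => by simpa using hC n⟩

/-- The bounded functions, as a subgroup of the group of quasi-morphisms. -/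
def BoundedIn : AddSubgroup QuasiMorphism :=
  BoundedFun.comap QuasiMorphism.subtype

namespace QMaux

lemma f0 (g : ℤ → ℤ) (C : ℤ) (hC : ∀ m n : ℤ, |g (m + n) - g m - g n| ≤ C) : |g 0| ≤ C := by
  have := hC 0 0; simp at this; simpa using this

lemma key (g : ℤ → ℤ) (C : ℤ) (hC : ∀ m n : ℤ, |g (m + n) - g m - g n| ≤ C) (k : ℕ) (n : ℤ) :
    |g (k * n) - k * g n| ≤ k * C + C := by
  induction k with
  | zero => simpa using f0 g C hC
  | succ k ih =>
      have h1 := hC (k * n) n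
      have h2 : |g ((k + 1 : ℕ) * n) - ((k : ℤ) + 1) * g n|
          ≤ |g (k * n + n) - g (k * n) - g n| + |g (k * n) - k * g n| := by
        push_cast
        rw [show ((k:ℤ)+1) * n = k * n + n by ring]
        calc |g (k * n + n) - ((k:ℤ) + 1) * g n|
            = |(g (k * n + n) - g (k * n) - g n) + (g (k * n) - k * g n)| := by ring_nf
          _ ≤ _ := abs_add_le _ _
      calc |g ((k + 1 : ℕ) * n) - ((k + 1 : ℕ) : ℤ) * g n|
          = |g ((k + 1 : ℕ) * n) - ((k : ℤ) + 1) * g n| := by push_cast; ring_nf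
        _ ≤ |g (k * n + n) - g (k * n) - g n| + |g (k * n) - k * g n| := h2
        _ ≤ C + (k * C + C) := add_le_add h1 ih
        _ = (k + 1 : ℕ) * C + C := by push_cast; ring

/-- symmetric estimate in the reals -/
lemma sym (g : ℤ → ℤ) (C : ℤ) (hC : ∀ m n : ℤ, |g (m + n) - g m - g n| ≤ C)
    (m n : ℕ) (hm : 1 ≤ m) (hn : 1 ≤ n) :
    |(g m : ℝ) / m - (g n : ℝ) / n| ≤ 2 * C / m + 2 * C / n := by
  have hCnn : (0:ℤ) ≤ C := le_trans (abs_nonneg _) (hC 0 0)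
  have h1 := key g C hC n (m : ℤ)
  have h2 := key g C hC m (n : ℤ)
  have e : (n : ℤ) * m = (m : ℤ) * n := by ring
  rw [e] at h1
  have hZ : |(n : ℤ) * g m - (m : ℤ) * g n| ≤ 2 * n * C + 2 * m * C := by
    have t : |(n : ℤ) * g m - (m : ℤ) * g n|
        ≤ |g ((m:ℤ) * n) - (m:ℤ) * g n| + |g ((m:ℤ) * n) - (n:ℤ) * g m| := by
      have t1 := abs_sub_le ((n : ℤ) * g m) (g ((m:ℤ)*n)) ((m : ℤ) * g n)
      have t2 : |(n : ℤ) * g m - g ((m:ℤ)*n)| = |g ((m:ℤ)*n) - (n : ℤ) * g m| :=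
        abs_sub_comm _ _
      linarith
    have hm1 : (1:ℤ) ≤ (m:ℤ) := by exact_mod_cast hm
    have hn1 : (1:ℤ) ≤ (n:ℤ) := by exact_mod_cast hn
    calc |(n : ℤ) * g m - (m : ℤ) * g n| ≤ _ := t
      _ ≤ ((m:ℤ) * C + C) + ((n:ℤ) * C + C) := add_le_add h2 h1
      _ ≤ 2 * n * C + 2 * m * C := by nlinarith
  have hR : |(n : ℝ) * g m - (m : ℝ) * g n| ≤ 2 * n * C + 2 * m * C := by
    exact_mod_cast hZ
  have hm0 : (0:ℝ) < m := by exact_mod_cast hm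
  have hn0 : (0:ℝ) < n := by exact_mod_cast hn
  rw [div_sub_div _ _ (ne_of_gt hm0) (ne_of_gt hn0), abs_div,
    abs_of_pos (mul_pos hm0 hn0), div_le_iff₀ (mul_pos hm0 hn0)]
  have e2 : (2 * (C:ℝ) / m + 2 * C / n) * (m * n) = 2 * n * C + 2 * m * C := by
    field_simp
  rw [e2]
  calc |(g m : ℝ) * n - m * g n| = |(n : ℝ) * g m - (m : ℝ) * g n| := by ring_nf
    _ ≤ _ := hR

/-- existence of the limit -/
lemma exists_lim (f : QuasiMorphism) :
    ∃ l : ℝ, Tendsto (fun n : ℕ => ((f : ℤ → ℤ) n : ℝ) / n) atTop (nhds l) := by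
  obtain ⟨C, hC⟩ := f.2
  set g : ℤ → ℤ := (f : ℤ → ℤ) with hg
  have hCnnR : (0:ℝ) ≤ C := by exact_mod_cast le_trans (abs_nonneg _) (hC 0 0)
  set a : ℕ → ℝ := fun k => (g (k+1) : ℝ) / (k+1) with ha
  have hcauchy : CauchySeq a := by
    apply cauchySeq_of_le_tendsto_0 (fun N : ℕ => 4 * C / (N+1))
    · intro i j N hi hj
      have h := sym g C hC (i+1) (j+1) (by omega) (by omega)
      have hb : ∀ k : ℕ, N ≤ k → 2 * (C:ℝ) / (k+1) ≤ 2 * C / (N+1) := by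
        intro k hk
        apply div_le_div_of_nonneg_left (by linarith) (by positivity)
        · push_cast; linarith [(Nat.cast_le (α := ℝ)).mpr hk]
      have e1 : ((i+1 : ℕ) : ℝ) = (i:ℝ)+1 := by push_cast; ring
      have e2 : ((j+1 : ℕ) : ℝ) = (j:ℝ)+1 := by push_cast; ring
      rw [Real.dist_eq]
      calc |a i - a j| ≤ 2 * C / ((i:ℝ)+1) + 2 * C / ((j:ℝ)+1) := by
            simpa [ha, e1, e2] using h
        _ ≤ 2 * C / ((N:ℝ)+1) + 2 * C / ((N:ℝ)+1) := add_le_add (hb i hi) (hb j hj)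
        _ = 4 * C / ((N:ℝ)+1) := by ring
    · have : Tendsto (fun N : ℕ => ((N:ℝ)+1)) atTop atTop :=
        tendsto_atTop_add_const_right _ 1 tendsto_natCast_atTop_atTop
      simpa using Tendsto.div_atTop (tendsto_const_nhds (x := (4:ℝ) * C)) this
  obtain ⟨l, hl⟩ := cauchySeq_tendsto_of_complete hcauchy
  refine ⟨l, ?_⟩
  have : (fun n : ℕ => (g (n+1) : ℝ) / (n+1)) = fun n : ℕ => (g ((n+1 : ℕ) : ℤ) : ℝ) / ((n+1:ℕ):ℝ) := by
    funext n; push_cast; ring_nf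
  rw [← tendsto_add_atTop_iff_nat 1]
  simpa [ha, this] using hl


noncomputable def L (f : QuasiMorphism) : ℝ := (exists_lim f).choose

lemma L_tendsto (f : QuasiMorphism) :
    Tendsto (fun n : ℕ => ((f : ℤ → ℤ) n : ℝ) / n) atTop (nhds (L f)) :=
  (exists_lim f).choose_spec

/-- the limit of an eventually-bound argument: |L f - g n / n| ≤ 2C/n for n ≥ 1 -/
lemma L_bound (f : QuasiMorphism) (C : ℤ) (hC : ∀ m n : ℤ, |(f:ℤ→ℤ) (m + n) - (f:ℤ→ℤ) m - (f:ℤ→ℤ) n| ≤ C)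
    (n : ℕ) (hn : 1 ≤ n) : |L f - ((f:ℤ→ℤ) n : ℝ) / n| ≤ 2 * C / n := by
  set g : ℤ → ℤ := (f : ℤ → ℤ)
  have hlim : Tendsto (fun m : ℕ => |(g m : ℝ) / m - (g n : ℝ) / n|) atTop
      (nhds (|L f - (g n : ℝ) / n|)) := by
    exact ((L_tendsto f).sub tendsto_const_nhds).abs
  have hlim2 : Tendsto (fun m : ℕ => 2 * (C:ℝ) / m + 2 * C / n) atTop (nhds (2 * C / n)) := by
    have h1 : Tendsto (fun m : ℕ => 2 * (C:ℝ) / m) atTop (nhds 0) := by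
      simpa using Tendsto.div_atTop (tendsto_const_nhds (x := (2:ℝ) * C)) tendsto_natCast_atTop_atTop
    simpa using h1.add (tendsto_const_nhds (x := 2 * (C:ℝ) / n))
  refine le_of_tendsto_of_tendsto hlim hlim2 ?_
  filter_upwards [eventually_ge_atTop 1] with m hm
  exact sym g C hC m n hm hn

lemma L_zero : L 0 = 0 := by
  have h := L_tendsto 0
  have : Tendsto (fun n : ℕ => (((0 : QuasiMorphism) : ℤ → ℤ) n : ℝ) / n) atTop (nhds 0) := by
    simpa using tendsto_const_nhds (x := (0:ℝ)) (f := atTop (α := ℕ))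
  exact tendsto_nhds_unique h this

lemma L_add (f₁ f₂ : QuasiMorphism) : L (f₁ + f₂) = L f₁ + L f₂ := by
  have h := L_tendsto (f₁ + f₂)
  have h2 : Tendsto (fun n : ℕ => (((f₁ + f₂) : ℤ → ℤ) n : ℝ) / n) atTop
      (nhds (L f₁ + L f₂)) := by
    have := (L_tendsto f₁).add (L_tendsto f₂)
    refine this.congr fun n => ?_
    show ((f₁ : ℤ → ℤ) n : ℝ) / n + ((f₂ : ℤ → ℤ) n : ℝ) / n = _
    have e : (((f₁ + f₂ : QuasiMorphism) : ℤ → ℤ)) n = (f₁ : ℤ → ℤ) n + (f₂ : ℤ → ℤ) n := rfl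
    show _ = ((((f₁ + f₂ : QuasiMorphism) : ℤ → ℤ)) n : ℝ) / (n:ℝ)
    rw [e]; push_cast; ring
  exact tendsto_nhds_unique h h2

noncomputable def Lhom : QuasiMorphism →+ ℝ where
  toFun := L
  map_zero' := L_zero
  map_add' := L_add

lemma L_bounded_zero (f : QuasiMorphism) (hf : f ∈ BoundedIn) : L f = 0 := by
  obtain ⟨B, hB⟩ := hf
  have h2 : Tendsto (fun n : ℕ => ((f : ℤ → ℤ) n : ℝ) / n) atTop (nhds 0) := by
    rw [tendsto_iff_dist_tendsto_zero]
    apply squeeze_zero' (g := fun n : ℕ => (B:ℝ) / n) (Eventually.of_forall fun n => dist_nonneg)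
    · filter_upwards [eventually_ge_atTop 1] with n hn
      have hn0 : (0:ℝ) < n := by exact_mod_cast hn
      rw [Real.dist_eq, sub_zero, abs_div, abs_of_pos hn0, div_le_div_iff₀ hn0 hn0]
      have : |((f : ℤ → ℤ) n : ℝ)| ≤ (B:ℝ) := by exact_mod_cast hB n
      nlinarith [abs_nonneg ((f : ℤ → ℤ) n : ℝ)]
    · exact Tendsto.div_atTop (tendsto_const_nhds (x := (B:ℝ))) tendsto_natCast_atTop_atTop
  exact tendsto_nhds_unique (L_tendsto f) h2

lemma bounded_of_L_zero (f : QuasiMorphism) (hf : L f = 0) : f ∈ BoundedIn := by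
  obtain ⟨C, hC⟩ := f.2
  set g : ℤ → ℤ := (f : ℤ → ℤ) with hg
  have hCnn : (0:ℤ) ≤ C := le_trans (abs_nonneg _) (hC 0 0)
  have hpos : ∀ n : ℕ, 1 ≤ n → |g n| ≤ 2 * C := by
    intro n hn
    have h := L_bound f C hC n hn
    rw [hf] at h
    have hn0 : (0:ℝ) < n := by exact_mod_cast hn
    have : |(g n : ℝ)| ≤ 2 * C := by
      rw [abs_sub_comm, sub_zero, abs_div, abs_of_pos hn0, div_le_div_iff₀ hn0 hn0] at h
      have h2C : (0:ℝ) ≤ 2 * (C:ℝ) := by positivity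
      nlinarith
    exact_mod_cast this
  refine ⟨2 * C + (2 * C + C + |g 0|), fun n => ?_⟩
  show |g n| ≤ _
  rcases lt_trichotomy n 0 with hlt | heq | hgt
  · -- n < 0 : use hC n (-n)
    have h := hC n (-n)
    have e : n + -n = 0 := by ring
    rw [e] at h
    obtain ⟨k, hk, rfl⟩ : ∃ k : ℕ, 1 ≤ k ∧ n = -(k : ℤ) := by
      refine ⟨(-n).toNat, ?_, ?_⟩ <;> omega
    have hpk : |g k| ≤ 2 * C := hpos k hk
    have e2 : (-(k:ℤ)) + (k:ℤ) = 0 := by ring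
    have h2 := hC (-(k:ℤ)) (k:ℤ)
    rw [e2] at h2
    have habs : |g 0 - g (k:ℤ)| ≤ |g 0| + |g (k:ℤ)| := by
      calc |g 0 - g (k:ℤ)| ≤ |g 0| + |(-(g (k:ℤ)))| := by
            simpa [← sub_eq_add_neg] using abs_add_le (g 0) (-(g (k:ℤ)))
        _ = |g 0| + |g (k:ℤ)| := by rw [abs_neg]
    have h4 : |g (-(k:ℤ))| ≤ |g (-(k:ℤ)) - (g 0 - g (k:ℤ))| + |g 0 - g (k:ℤ)| := by
      calc |g (-(k:ℤ))| = |(g (-(k:ℤ)) - (g 0 - g (k:ℤ))) + (g 0 - g (k:ℤ))| := by ring_nf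
        _ ≤ _ := abs_add_le _ _
    have h5 : |g (-(k:ℤ)) - (g 0 - g (k:ℤ))| ≤ C := by
      calc |g (-(k:ℤ)) - (g 0 - g (k:ℤ))| = |g 0 - g (-(k:ℤ)) - g (k:ℤ)| := by
            rw [abs_sub_comm]; ring_nf
        _ ≤ C := h2
    have hf0 : |g 0| ≤ C := f0 g C hC
    linarith
  · subst heq
    have hf0 : |g 0| ≤ C := f0 g C hC
    linarith [abs_nonneg (g 0)]
  · obtain ⟨k, hk, rfl⟩ : ∃ k : ℕ, 1 ≤ k ∧ n = (k : ℤ) := by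
      refine ⟨n.toNat, ?_, ?_⟩ <;> omega
    have := hpos k hk
    have hf0 : (0:ℤ) ≤ |g 0| := abs_nonneg _
    linarith

/-- the floor quasimorphism -/
noncomputable def flr (x : ℝ) : QuasiMorphism := by
  refine ⟨fun n : ℤ => ⌊(n:ℝ) * x⌋, ⟨3, fun m n => ?_⟩⟩
  have hfl : ∀ y : ℝ, |(⌊y⌋ : ℝ) - y| ≤ 1 := by
    intro y
    rw [abs_le]
    constructor
    · linarith [Int.sub_one_lt_floor y]
    · linarith [Int.floor_le y]
  have hR : |(⌊((m+n : ℤ):ℝ) * x⌋ : ℝ) - ⌊(m:ℝ)*x⌋ - ⌊(n:ℝ)*x⌋| ≤ 3 := by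
    have h1 := hfl (((m+n : ℤ):ℝ) * x)
    have h2 := hfl ((m:ℝ)*x)
    have h3 := hfl ((n:ℝ)*x)
    have e : ((m+n : ℤ):ℝ) * x = (m:ℝ)*x + (n:ℝ)*x := by push_cast; ring
    have t : |(⌊((m+n : ℤ):ℝ) * x⌋ : ℝ) - ⌊(m:ℝ)*x⌋ - ⌊(n:ℝ)*x⌋|
        = |((⌊((m+n : ℤ):ℝ) * x⌋ : ℝ) - ((m+n : ℤ):ℝ) * x)
          + (((m:ℝ)*x) - ⌊(m:ℝ)*x⌋) + (((n:ℝ)*x) - ⌊(n:ℝ)*x⌋)| := by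
      rw [e]; ring_nf
    rw [t]
    calc |_| ≤ |((⌊((m+n : ℤ):ℝ) * x⌋ : ℝ) - ((m+n : ℤ):ℝ) * x)
          + (((m:ℝ)*x) - ⌊(m:ℝ)*x⌋)| + |((n:ℝ)*x) - ⌊(n:ℝ)*x⌋| := abs_add_le _ _
      _ ≤ (|(⌊((m+n : ℤ):ℝ) * x⌋ : ℝ) - ((m+n : ℤ):ℝ) * x|
          + |((m:ℝ)*x) - ⌊(m:ℝ)*x⌋|) + |((n:ℝ)*x) - ⌊(n:ℝ)*x⌋| :=
        add_le_add_left (abs_add_le _ _) _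
      _ ≤ 3 := by
        rw [abs_sub_comm (((m:ℝ)*x)), abs_sub_comm (((n:ℝ)*x))]
        linarith
  exact_mod_cast hR

lemma L_flr (x : ℝ) : L (flr x) = x := by
  have h2 : Tendsto (fun n : ℕ => (((flr x : QuasiMorphism) : ℤ → ℤ) n : ℝ) / n) atTop (nhds x) := by
    rw [tendsto_iff_dist_tendsto_zero]
    apply squeeze_zero' (Eventually.of_forall fun n => dist_nonneg)
    · filter_upwards [eventually_ge_atTop 1] with n hn
      have hn0 : (0:ℝ) < n := by exact_mod_cast hn
      show dist ((⌊((n:ℤ):ℝ) * x⌋ : ℝ) / n) x ≤ 1 / n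
      have e : ((n:ℤ):ℝ) = (n:ℝ) := by push_cast; ring
      rw [e, Real.dist_eq, div_sub' (ne_of_gt hn0), abs_div, abs_of_pos hn0,
        div_le_div_iff₀ hn0 hn0]
      have hfl : |(⌊(n:ℝ) * x⌋ : ℝ) - (n:ℝ) * x| ≤ 1 := by
        rw [abs_le]
        constructor
        · linarith [Int.sub_one_lt_floor ((n:ℝ) * x)]
        · linarith [Int.floor_le ((n:ℝ) * x)]
      nlinarith
    · exact Tendsto.div_atTop (tendsto_const_nhds (x := (1:ℝ))) tendsto_natCast_atTop_atTop
  exact tendsto_nhds_unique (L_tendsto (flr x)) h2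

end QMaux


open QMaux in
/-- The map `f ↦ lim_{n→∞} f n / n` induces a group isomorphism from the quotient of the
group of quasi-morphisms of `ℤ` by the subgroup of bounded functions onto `ℝ`. -/
theorem quasimorphism_quotient_iso_real :
    ∃ φ : (QuasiMorphism ⧸ BoundedIn) ≃+ ℝ,
      ∀ f : QuasiMorphism,
        Tendsto (fun n : ℕ => ((f : ℤ → ℤ) n : ℝ) / n) atTop
          (nhds (φ (QuotientAddGroup.mk f))) := by
  have hker : ∀ f ∈ BoundedIn, Lhom f = 0 := fun f hf => L_bounded_zero f hf
  set ψ : (QuasiMorphism ⧸ BoundedIn) →+ ℝ := QuotientAddGroup.lift BoundedIn Lhom hker with hψ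
  have hinj : Function.Injective ψ := by
    rw [injective_iff_map_eq_zero]
    intro a ha
    obtain ⟨f, rfl⟩ := QuotientAddGroup.mk_surjective a
    rw [QuotientAddGroup.eq_zero_iff]
    exact bounded_of_L_zero f ha
  have hsurj : Function.Surjective ψ := by
    intro x
    exact ⟨QuotientAddGroup.mk (flr x), L_flr x⟩
  refine ⟨AddEquiv.ofBijective ψ ⟨hinj, hsurj⟩, fun f => ?_⟩
  have : (AddEquiv.ofBijective ψ ⟨hinj, hsurj⟩) (QuotientAddGroup.mk f) = L f := by
    simp [hψ, AddEquiv.ofBijective]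
    rfl
  rw [this]
  exact L_tendsto f
end

section
/- Two quasi-morphisms f, g : ℤ → ℤ differ by a bounded function if and only if lim_{n→∞} f(n)/n = lim_{n→∞} g(n)/n. -/
open Filter

private lemma qm_iterate (f : ℤ → ℤ) (C : ℤ)
    (hC : ∀ m n : ℤ, |f (m + n) - f m - f n| ≤ C) :
    ∀ (m : ℕ) (n : ℤ), |f (m * n) - m * f n| ≤ m * C + C := by
  intro m n
  have hf0 : |f 0| ≤ C := by have := hC 0 0; simpa using this
  have hC0 : (0 : ℤ) ≤ C := le_trans (abs_nonneg _) hf0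
  induction m with
  | zero => simpa using hf0
  | succ k ih =>
    have h1 : |f ((k : ℤ) * n + n) - f ((k : ℤ) * n) - f n| ≤ C := hC _ _
    have heq : ((k : ℤ) + 1) * n = (k : ℤ) * n + n := by ring
    calc |f (((k : ℕ) + 1 : ℕ) * n) - ((k : ℕ) + 1 : ℕ) * f n|
        = |(f ((k : ℤ) * n + n) - f ((k : ℤ) * n) - f n) + (f ((k : ℤ) * n) - k * f n)| := by
          push_cast
          rw [heq]
          ring_nf
      _ ≤ |f ((k : ℤ) * n + n) - f ((k : ℤ) * n) - f n| + |f ((k : ℤ) * n) - k * f n| :=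
          abs_add_le _ _
      _ ≤ C + (k * C + C) := add_le_add h1 ih
      _ = ((k : ℕ) + 1 : ℕ) * C + C := by push_cast; ring

private lemma qm_linear_pos (f : ℤ → ℤ) (C : ℤ)
    (hC : ∀ m n : ℤ, |f (m + n) - f m - f n| ≤ C) (L : ℝ)
    (hL : Tendsto (fun n : ℕ => (f n : ℝ) / n) atTop (nhds L))
    (n : ℕ) (hn : 1 ≤ n) : |(f n : ℝ) - n * L| ≤ 2 * C := by
  have hiter := qm_iterate f C hC
  have hf0 : |f 0| ≤ C := by have := hC 0 0; simpa using this
  have hC0 : (0 : ℤ) ≤ C := le_trans (abs_nonneg _) hf0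
  have hC0R : (0 : ℝ) ≤ C := by exact_mod_cast hC0
  have hnpos : (0 : ℝ) < n := by exact_mod_cast hn
  have hmn : Tendsto (fun m : ℕ => m * n) atTop atTop := by
    apply tendsto_atTop_mono (fun m => Nat.le_mul_of_pos_right m hn) tendsto_id
  have h1 : Tendsto (fun m : ℕ => (f ((m * n : ℕ) : ℤ) : ℝ) / ((m * n : ℕ) : ℝ)) atTop
      (nhds L) := hL.comp hmn
  have h2 : Tendsto (fun m : ℕ => |(f ((m * n : ℕ) : ℤ) : ℝ) / ((m * n : ℕ) : ℝ)
      - (f n : ℝ) / n|) atTop (nhds |L - (f n : ℝ) / n|) :=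
    (h1.sub tendsto_const_nhds).abs
  have hbound : |L - (f n : ℝ) / n| ≤ 2 * (C : ℝ) / n := by
    apply le_of_tendsto h2
    filter_upwards [eventually_ge_atTop 1] with m hm
    have hmpos : (0 : ℝ) < m := by exact_mod_cast hm
    have hm1R : (1 : ℝ) ≤ m := by exact_mod_cast hm
    have hib : |(f ((m : ℤ) * n) : ℝ) - m * f n| ≤ m * C + C := by
      exact_mod_cast hiter m n
    have hcast : ((m * n : ℕ) : ℤ) = (m : ℤ) * n := by push_cast; ring
    rw [hcast]
    have hmn0 : (0 : ℝ) < (m : ℝ) * n := mul_pos hmpos hnpos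
    have key : (f ((m : ℤ) * n) : ℝ) / ((m * n : ℕ) : ℝ) - (f n : ℝ) / n
        = ((f ((m : ℤ) * n) : ℝ) - m * f n) / ((m : ℝ) * n) := by
      push_cast
      field_simp
    rw [key, abs_div, abs_of_pos hmn0]
    calc |(f ((m : ℤ) * n) : ℝ) - m * f n| / ((m : ℝ) * n)
        ≤ ((m : ℝ) * C + C) / ((m : ℝ) * n) := by gcongr
      _ ≤ 2 * (C : ℝ) / n := by
          rw [div_le_div_iff₀ hmn0 hnpos]
          nlinarith [mul_nonneg (mul_nonneg hC0R (le_of_lt hnpos)) (sub_nonneg.mpr hm1R)]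
  have hrw : (f n : ℝ) - n * L = (n : ℝ) * ((f n : ℝ) / n - L) := by field_simp
  rw [hrw, abs_mul, abs_of_pos hnpos, abs_sub_comm]
  calc (n : ℝ) * |L - (f n : ℝ) / n| ≤ n * (2 * (C : ℝ) / n) := by
        apply mul_le_mul_of_nonneg_left hbound (le_of_lt hnpos)
    _ = 2 * C := by field_simp

private lemma qm_linear (f : ℤ → ℤ) (C : ℤ)
    (hC : ∀ m n : ℤ, |f (m + n) - f m - f n| ≤ C) (L : ℝ)
    (hL : Tendsto (fun n : ℕ => (f n : ℝ) / n) atTop (nhds L)) :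
    ∀ n : ℤ, |(f n : ℝ) - n * L| ≤ 4 * C := by
  have hf0 : |f 0| ≤ C := by have := hC 0 0; simpa using this
  have hC0 : (0 : ℤ) ≤ C := le_trans (abs_nonneg _) hf0
  have hC0R : (0 : ℝ) ≤ C := by exact_mod_cast hC0
  have hpos : ∀ n : ℕ, 1 ≤ n → |(f n : ℝ) - n * L| ≤ 2 * C := qm_linear_pos f C hC L hL
  intro n
  rcases lt_trichotomy n 0 with hneg | hzero | hpos'
  · have hnn : 1 ≤ (-n).toNat := by omega
    have hcast : ((-n).toNat : ℤ) = -n := Int.toNat_of_nonneg (by omega)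
    have hcR : (((-n).toNat : ℕ) : ℝ) = -(n : ℝ) := by exact_mod_cast hcast
    have h1 := hpos (-n).toNat hnn
    rw [hcast, hcR] at h1
    have h2 : |f (n + -n) - f n - f (-n)| ≤ C := hC n (-n)
    have h3 : |f n + f (-n)| ≤ 2 * C := by
      have he : f n + f (-n) = f 0 - (f (n + -n) - f n - f (-n)) := by
        simp only [add_neg_cancel]; ring
      rw [he]
      calc |f 0 - (f (n + -n) - f n - f (-n))| ≤ |f 0| + |f (n + -n) - f n - f (-n)| :=
            abs_sub _ _
        _ ≤ C + C := add_le_add hf0 h2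
        _ = 2 * C := by ring
    have h3R : |(f n : ℝ) + f (-n)| ≤ 2 * C := by exact_mod_cast h3
    calc |(f n : ℝ) - n * L|
        = |((f n : ℝ) + f (-n)) - ((f (-n) : ℝ) - (-(n : ℝ)) * L)| := by congr 1; push_cast; ring
      _ ≤ |(f n : ℝ) + f (-n)| + |(f (-n) : ℝ) - (-(n : ℝ)) * L| := abs_sub _ _
      _ ≤ 2 * C + 2 * C := add_le_add h3R h1
      _ = 4 * C := by ring
  · subst hzero
    simp only [Int.cast_zero, zero_mul, sub_zero]
    have : |(f 0 : ℝ)| ≤ C := by exact_mod_cast hf0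
    linarith
  · have hnn : 1 ≤ n.toNat := by omega
    have hcast : (n.toNat : ℤ) = n := Int.toNat_of_nonneg (by omega)
    have hcR : ((n.toNat : ℕ) : ℝ) = (n : ℝ) := by exact_mod_cast hcast
    have h1 := hpos n.toNat hnn
    rw [hcast, hcR] at h1
    linarith

/-- Two quasi-morphisms `f, g : ℤ → ℤ` differ by a bounded function if and only if
they have the same limit `lim_{n→∞} f n / n = lim_{n→∞} g n / n`. -/
theorem quasimorphism_bounded_difference_iff_same_limit (f g : ℤ → ℤ)
    (hf : ∃ C : ℤ, ∀ m n : ℤ, |f (m + n) - f m - f n| ≤ C)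
    (hg : ∃ C : ℤ, ∀ m n : ℤ, |g (m + n) - g m - g n| ≤ C)
    (Lf Lg : ℝ)
    (hLf : Tendsto (fun n : ℕ => (f n : ℝ) / n) atTop (nhds Lf))
    (hLg : Tendsto (fun n : ℕ => (g n : ℝ) / n) atTop (nhds Lg)) :
    (∃ C : ℤ, ∀ n : ℤ, |f n - g n| ≤ C) ↔ Lf = Lg := by
  obtain ⟨Cf, hCf⟩ := hf
  obtain ⟨Cg, hCg⟩ := hg
  constructor
  · rintro ⟨C, hC⟩
    have h0 : Tendsto (fun n : ℕ => (f n : ℝ) / n - (g n : ℝ) / n) atTop (nhds 0) := by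
      refine squeeze_zero_norm (a := fun n : ℕ => |(C : ℝ)| / n) (fun n => ?_) ?_
      · rcases Nat.eq_zero_or_pos n with h | h
        · subst h; simp
        · have hnpos : (0 : ℝ) < n := by exact_mod_cast h
          have heq : (f n : ℝ) / n - (g n : ℝ) / n = ((f n : ℝ) - g n) / n := by ring
          rw [heq, norm_div, Real.norm_natCast]
          have h1 : |(f n : ℝ) - g n| ≤ C := by exact_mod_cast hC n
          have h2 : (C : ℝ) ≤ |(C : ℝ)| := le_abs_self _
          have h3 : ‖(f n : ℝ) - g n‖ ≤ |(C : ℝ)| := by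
            simpa [Real.norm_eq_abs] using le_trans h1 h2
          exact div_le_div_of_nonneg_right h3 (le_of_lt hnpos)
      · exact tendsto_const_nhds.div_atTop tendsto_natCast_atTop_atTop
    have h1 : Tendsto (fun n : ℕ => (f n : ℝ) / n - (g n : ℝ) / n) atTop (nhds (Lf - Lg)) :=
      hLf.sub hLg
    have := tendsto_nhds_unique h1 h0
    linarith
  · intro hL
    subst hL
    have h1 := qm_linear f Cf hCf Lf hLf
    have h2 := qm_linear g Cg hCg Lf hLg
    refine ⟨4 * Cf + 4 * Cg, fun n => ?_⟩
    have hR : |(f n : ℝ) - g n| ≤ ((4 * Cf + 4 * Cg : ℤ) : ℝ) := by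
      calc |(f n : ℝ) - g n|
          = |((f n : ℝ) - n * Lf) - ((g n : ℝ) - n * Lf)| := by congr 1; ring
        _ ≤ |(f n : ℝ) - n * Lf| + |(g n : ℝ) - n * Lf| := abs_sub _ _
        _ ≤ 4 * Cf + 4 * Cg := add_le_add (h1 n) (h2 n)
        _ = ((4 * Cf + 4 * Cg : ℤ) : ℝ) := by push_cast; ring
    exact_mod_cast hR
end
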